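/- (Direct-blockage lower bound) Let C be a configuration of the BRP. Then every feasible move sequence for C contains at least as many relocations as the number of direct blockages of C; in particular f(Fin B) is at least the number of direct blockages of C. -/

import Mathlib

/-- A configuration of the BRP: each stack holds a list of blocks, bottom to top. -/
abbrev Config (B S : ℕ) := Fin S → List (Fin B)

/-- Every block occurs exactly once among the stacks. -/
def IsConfig {B S : ℕ} (C : Config B S) : Prop :=
  ∀ b : Fin B, (∑ s : Fin S, (C s).count b) = 1

/-- `a` lies strictly below `b` in stack `s` of `C`. -/
def StrictlyBelow {B S : ℕ} (C : Config B S) (s : Fin S) (a b : Fin B) : Prop :=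
  ∃ i j : ℕ, i < j ∧ (C s)[i]? = some a ∧ (C s)[j]? = some b

/-- A block is badly placed if some smaller-labelled block lies below it in its stack. -/
def BadlyPlaced {B S : ℕ} (C : Config B S) (b : Fin B) : Prop :=
  ∃ s a, a < b ∧ StrictlyBelow C s a b

/-- Moves: retrieve the top block of a stack, or relocate the top block of one
stack onto another stack. -/
inductive Move (S : ℕ) where
  | retrieve (s : Fin S)
  | relocate (src dst : Fin S)

def applyMove {B S : ℕ} (C : Config B S) : Move S → Config B S
  | .retrieve s => Function.update C s (C s).dropLast
  | .relocate src dst =>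
    match (C src).getLast? with
    | some b =>
      let C' := Function.update C src (C src).dropLast
      Function.update C' dst (C' dst ++ [b])
    | none => C

def Enabled {B S : ℕ} (C : Config B S) : Move S → Prop
  | .retrieve s => ∃ b, (C s).getLast? = some b ∧ ∀ (s' : Fin S), ∀ b' ∈ C s', b ≤ b'
  | .relocate src dst => src ≠ dst ∧ C src ≠ []

def play {B S : ℕ} (C : Config B S) : List (Move S) → Config B S
  | [] => C
  | m :: ms => play (applyMove C m) ms

def AllEnabled {B S : ℕ} (C : Config B S) : List (Move S) → Prop
  | [] => True
  | m :: ms => Enabled C m ∧ AllEnabled (applyMove C m) ms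

/-- A feasible move sequence: every move is enabled and at the end all blocks
have been retrieved. -/
def Feasible {B S : ℕ} (C : Config B S) (ms : List (Move S)) : Prop :=
  AllEnabled C ms ∧ ∀ s, play C ms s = []

/-- `b` is the block moved by `m` (a relocation) performed in configuration `C`. -/
def MovedBlock {B S : ℕ} (C : Config B S) (m : Move S) (b : Fin B) : Prop :=
  ∃ src dst, m = .relocate src dst ∧ src ≠ dst ∧ (C src).getLast? = some b

/-- The four types of relocation moves. -/
inductive MType where
  | BB | BG | GB | GG

/-- The relocation `m`, moving block `b` from configuration `C`, has the given type. -/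
def MTypeOf {B S : ℕ} (C : Config B S) (m : Move S) (b : Fin B) : MType → Prop
  | .BB => BadlyPlaced C b ∧ BadlyPlaced (applyMove C m) b
  | .BG => BadlyPlaced C b ∧ ¬ BadlyPlaced (applyMove C m) b
  | .GB => ¬ BadlyPlaced C b ∧ BadlyPlaced (applyMove C m) b
  | .GG => ¬ BadlyPlaced C b ∧ ¬ BadlyPlaced (applyMove C m) b

/-- `m` is a relocation of a block of `𝔅`. -/
def RelocIn {B S : ℕ} (𝔅 : Set (Fin B)) (C : Config B S) (m : Move S) : Prop :=
  ∃ b ∈ 𝔅, MovedBlock C m b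

/-- `m` is a relocation of a block of `𝔅` of type `mt`. -/
def RelocTypeIn {B S : ℕ} (mt : MType) (𝔅 : Set (Fin B)) (C : Config B S) (m : Move S) : Prop :=
  ∃ b ∈ 𝔅, MovedBlock C m b ∧ MTypeOf C m b mt

/-- `m` is a non-BG relocation of a block of `𝔅`. -/
def RelocNonBGIn {B S : ℕ} (𝔅 : Set (Fin B)) (C : Config B S) (m : Move S) : Prop :=
  ∃ b ∈ 𝔅, MovedBlock C m b ∧ ¬ MTypeOf C m b MType.BG

/-- Count the moves of a sequence satisfying `P` (evaluated in the configuration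
in which each move is performed). -/
noncomputable def countMoves {B S : ℕ} (P : Config B S → Move S → Prop) :
    Config B S → List (Move S) → ℕ
  | _, [] => 0
  | C, m :: ms =>
    (@ite ℕ (P C m) (Classical.propDecidable _) 1 0) + countMoves P (applyMove C m) ms

/-- Minimum over feasible move sequences of the number of moves satisfying `P`. -/
noncomputable def fMin {B S : ℕ} (C : Config B S) (P : Config B S → Move S → Prop) : ℕ :=
  sInf { n | ∃ ms, Feasible C ms ∧ countMoves P C ms = n }

/-- `f(𝔅)`: least number of relocations applied to blocks of `𝔅`. -/
noncomputable def fRel {B S : ℕ} (C : Config B S) (𝔅 : Set (Fin B)) : ℕ :=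
  fMin C (RelocIn 𝔅)

/-- `f_mt(𝔅)`: least number of type-`mt` relocations applied to blocks of `𝔅`. -/
noncomputable def fTyp {B S : ℕ} (C : Config B S) (mt : MType) (𝔅 : Set (Fin B)) : ℕ :=
  fMin C (RelocTypeIn mt 𝔅)

/-- `f_nonBG(𝔅)`: least number of non-BG relocations applied to blocks of `𝔅`. -/
noncomputable def fNonBG {B S : ℕ} (C : Config B S) (𝔅 : Set (Fin B)) : ℕ :=
  fMin C (RelocNonBGIn 𝔅)

/-- The top 1st layer: the topmost block of each stack. -/
def TopLayer {B S : ℕ} (C : Config B S) : Set (Fin B) :=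
  {b | ∃ s, (C s).getLast? = some b}

/-- The top `k` layers: the topmost `k` blocks of every stack. -/
def TopK {B S : ℕ} (C : Config B S) (k : ℕ) : Set (Fin B) :=
  {b | ∃ s, b ∈ (C s).drop ((C s).length - k)}

/-- The top `j`-th layer: the `j`-th block from the top of every stack. -/
def TopJth {B S : ℕ} (C : Config B S) (j : ℕ) : Set (Fin B) :=
  {b | ∃ s, (C s)[(C s).length - j]? = some b}

/-- A virtual layer: a set of blocks containing exactly one block from each stack. -/
def VirtualLayer {B S : ℕ} (C : Config B S) (V : Set (Fin B)) : Prop :=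
  ∀ s : Fin S, ∃! b : Fin B, b ∈ V ∧ b ∈ C s

/-- `a` lies at or below the `V`-block of stack `s`. -/
def AtOrBelowLayer {B S : ℕ} (C : Config B S) (V : Set (Fin B)) (s : Fin S) (a : Fin B) : Prop :=
  ∃ b j, b ∈ V ∧ (C s)[j]? = some b ∧ a ∈ (C s).take (j + 1)

/-- `V` is a virtual layer satisfying the conditions of Property 5:
(1) in some stack, a block strictly below the `V`-block of that stack has a smaller
label than every block of `V`; (2) every badly placed block of `V` has a label
strictly greater than the minimum label present in stack `s` after deleting all
blocks strictly above the `V`-block of `s`, for every stack `s`. -/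
def P5 {B S : ℕ} (C : Config B S) (V : Set (Fin B)) : Prop :=
  VirtualLayer C V ∧
  (∃ s a b, b ∈ V ∧ StrictlyBelow C s a b ∧ ∀ c ∈ V, a < c) ∧
  (∀ b ∈ V, BadlyPlaced C b → ∀ s : Fin S, ∃ a, AtOrBelowLayer C V s a ∧ a < b)

/-- A pair of virtual layers `V₁` (upper), `V₂` (lower) with shared well-placed
block `bstar` satisfying the conditions of Property 7. -/
def P7 {B S : ℕ} (C : Config B S) (V₁ V₂ : Set (Fin B)) (bstar : Fin B) : Prop :=
  V₁ ∩ V₂ = {bstar} ∧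
  ¬ BadlyPlaced C bstar ∧
  (∀ s : Fin S, bstar ∉ C s →
    ∃ b₁ b₂, b₁ ∈ V₁ ∧ b₂ ∈ V₂ ∧ StrictlyBelow C s b₂ b₁) ∧
  P5 C V₁ ∧ P5 C V₂ ∧
  (∀ s : Fin S, ∃ a, AtOrBelowLayer C V₁ s a ∧ a ≤ bstar) ∧
  (∃ s : Fin S, ∀ a, AtOrBelowLayer C V₁ s a → bstar ≤ a)

/-- Push blocks one by one onto the indicated stacks. -/
def pushAll {B S : ℕ} (C : Config B S) : List (Fin B × Fin S) → Config B S
  | [] => C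
  | p :: rest => pushAll (Function.update C p.2 (C p.2 ++ [p.1])) rest

/-- The blocks lying strictly above position `i` of stack `s`, listed from the
top of the stack downward (the processing order of the experiment). -/
def aboveList {B S : ℕ} (C : Config B S) (s : Fin S) (i : ℕ) : List (Fin B) :=
  ((C s).drop (i + 1)).reverse

/-- The arrangement resulting from the experiment of Property 4: the blocks above
position `i` of stack `s` are relocated exactly once, from the top downward, onto
the stacks listed in `ds`. -/
def expResult {B S : ℕ} (C : Config B S) (s : Fin S) (i : ℕ) (ds : List (Fin S)) :
    Config B S :=
  pushAll (Function.update C s ((C s).take (i + 1))) ((aboveList C s i).zip ds)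

/-- The condition of Property 4 (target block at position `i` of stack `sStar`):
in every experiment, some relocated block ends badly placed. -/
def P4Cond {B S : ℕ} (C : Config B S) (sStar : Fin S) (i : ℕ) : Prop :=
  ∀ ds : List (Fin S), ds.length = (aboveList C sStar i).length →
    (∀ d ∈ ds, d ≠ sStar) →
    ∃ b ∈ aboveList C sStar i, BadlyPlaced (expResult C sStar i ds) b

/-- The set `𝔅⁴`: the blocks above the target block together with, for each
nonempty stack other than the target's stack, its block of minimum label. -/
def B4Set {B S : ℕ} (C : Config B S) (sStar : Fin S) (i : ℕ) : Set (Fin B) :=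
  {b | b ∈ aboveList C sStar i} ∪
  {b | ∃ s, s ≠ sStar ∧ b ∈ C s ∧ ∀ b' ∈ C s, b ≤ b'}

/-- The number of direct blockages: adjacent pairs in a stack whose upper block
has a strictly larger label. -/
def directBlockages {B S : ℕ} (C : Config B S) : ℕ :=
  ∑ s : Fin S, (((C s).zip (C s).tail).filter (fun p => decide (p.1 < p.2))).length

/-- The number of relocations in a move sequence. -/
def relocCount {S : ℕ} (ms : List (Move S)) : ℕ :=
  (ms.filter (fun m => match m with | Move.relocate _ _ => true | Move.retrieve _ => false)).length

/-- The minimum number of relocations over all feasible move sequences. -/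
noncomputable def fAll {B S : ℕ} (C : Config B S) : ℕ :=
  sInf { n | ∃ ms, Feasible C ms ∧ relocCount ms = n }

/-- `g(L)`: `L` plus the minimum number of direct blockages over all partial
plans with exactly `L` relocations. -/
noncomputable def gIter {B S : ℕ} (C : Config B S) (L : ℕ) : ℕ :=
  L + sInf { d | ∃ ms : List (Move S), AllEnabled C ms ∧ relocCount ms = L ∧
      d = directBlockages (play C ms) }

/-! Write `directBlockages` as a sum over stacks of the number of adjacent ascents. Retrieving a
globally minimal block from the top of a stack destroys no ascent, since the block below it is not
smaller; a relocation destroys at most the ascent at the top of its source stack, and pushing a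
block onto a stack destroys none. Hence the count drops by at most one per relocation, and it is
zero once every stack is empty.

For the bound on `fRel` a feasible sequence has to exist, since `sInf ∅ = 0`. With a second stack
available one can always uncover a minimal block by relocating everything above it and then
retrieve it; recursion on the number of blocks finishes. -/

open Function

theorem Finset.sum_comp_update_add {ι α M : Type*} [Fintype ι] [DecidableEq ι] [AddCommMonoid M]
    (g : α → M) (f : ι → α) (i : ι) (a : α) :
    ∑ j, g (update f i a j) + g (f i) = ∑ j, g (f j) + g a := by
  rw [← Finset.add_sum_erase _ _ (Finset.mem_univ i), ← Finset.add_sum_erase _ _ (Finset.mem_univ i),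
    update_self, Finset.sum_congr rfl fun j hj => by rw [update_of_ne (Finset.ne_of_mem_erase hj)]]
  abel

theorem List.zip_tail_concat {α : Type*} : ∀ (l : List α) (x : α),
    (l ++ [x]).zip (l ++ [x]).tail = l.zip l.tail ++ (l.getLast?.map (·, x)).toList
  | [], _ => rfl
  | [_], _ => rfl
  | a :: b :: l, x => by
    simpa [List.getLast?_cons_cons] using List.zip_tail_concat (b :: l) x

section StackBlockages

variable {α : Type*} [LT α] [DecidableLT α]

def stackBlockages (l : List α) : ℕ :=
  ((l.zip l.tail).filter fun p => decide (p.1 < p.2)).length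

theorem stackBlockages_concat (l : List α) (x : α) :
    stackBlockages (l ++ [x]) =
      stackBlockages l + ((l.getLast?.map (·, x)).toList.filter fun p => decide (p.1 < p.2)).length := by
  rw [stackBlockages, List.zip_tail_concat, List.filter_append, List.length_append, stackBlockages]

theorem stackBlockages_le_concat (l : List α) (x : α) :
    stackBlockages l ≤ stackBlockages (l ++ [x]) := by
  rw [stackBlockages_concat]
  exact Nat.le_add_right _ _

theorem stackBlockages_concat_le (l : List α) (x : α) :
    stackBlockages (l ++ [x]) ≤ stackBlockages l + 1 := by
  rw [stackBlockages_concat]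
  gcongr
  cases l.getLast? with
  | none => simp
  | some a => exact (List.length_filter_le _ _).trans (by simp)

theorem stackBlockages_concat_of_forall_not_lt {l : List α} {x : α} (h : ∀ a ∈ l, ¬ a < x) :
    stackBlockages (l ++ [x]) = stackBlockages l := by
  rw [stackBlockages_concat]
  cases hl : l.getLast? with
  | none => simp
  | some a => simpa using h a (List.mem_of_getLast? hl)

end StackBlockages

section Moves

variable {B S : ℕ}

theorem play_append (C : Config B S) (ms ms' : List (Move S)) :
    play C (ms ++ ms') = play (play C ms) ms' := by
  induction ms generalizing C with
  | nil => rfl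
  | cons m ms ih => exact ih (applyMove C m)

theorem AllEnabled.append {C : Config B S} {ms ms' : List (Move S)} (h : AllEnabled C ms)
    (h' : AllEnabled (play C ms) ms') : AllEnabled C (ms ++ ms') := by
  induction ms generalizing C with
  | nil => exact h'
  | cons m ms ih => exact ⟨h.1, ih h.2 h'⟩

theorem applyMove_retrieve_of_eq_concat {C : Config B S} {s : Fin S} {l : List (Fin B)}
    {x : Fin B} (h : C s = l ++ [x]) : applyMove C (.retrieve s) = update C s l := by
  simp [applyMove, h]

theorem applyMove_relocate_of_eq_concat {C : Config B S} {src dst : Fin S} {l : List (Fin B)}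
    {x : Fin B} (h : C src = l ++ [x]) (hsd : src ≠ dst) :
    applyMove C (.relocate src dst) = update (update C src l) dst (C dst ++ [x]) := by
  simp [applyMove, h, update_of_ne hsd.symm]

theorem directBlockages_update_add (C : Config B S) (s : Fin S) (l : List (Fin B)) :
    directBlockages (update C s l) + stackBlockages (C s) =
      directBlockages C + stackBlockages l :=
  Finset.sum_comp_update_add stackBlockages C s l

theorem directBlockages_applyMove_retrieve {C : Config B S} {s : Fin S}
    (h : Enabled C (.retrieve s)) : directBlockages (applyMove C (.retrieve s)) = directBlockages C := by
  obtain ⟨x, hx, hmin⟩ := h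
  obtain ⟨l, hl⟩ := List.getLast?_eq_some_iff.1 hx
  have hpush : stackBlockages (l ++ [x]) = stackBlockages l :=
    stackBlockages_concat_of_forall_not_lt fun a ha => not_lt_of_ge (hmin s a (by simp [hl, ha]))
  have := directBlockages_update_add C s l
  rw [applyMove_retrieve_of_eq_concat hl]
  rw [hl, hpush] at this
  omega

theorem directBlockages_le_applyMove_relocate (C : Config B S) {src dst : Fin S}
    (hsd : src ≠ dst) :
    directBlockages C ≤ directBlockages (applyMove C (.relocate src dst)) + 1 := by
  cases hx : (C src).getLast? with
  | none => simp [applyMove, hx]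
  | some x =>
    obtain ⟨l, hl⟩ := List.getLast?_eq_some_iff.1 hx
    rw [applyMove_relocate_of_eq_concat hl hsd]
    have hsrc := directBlockages_update_add C src l
    have hdst := directBlockages_update_add (update C src l) dst (C dst ++ [x])
    rw [update_of_ne hsd.symm] at hdst
    rw [hl] at hsrc
    have := stackBlockages_concat_le l x
    have := stackBlockages_le_concat (C dst) x
    omega

theorem directBlockages_le_countMoves_add {C : Config B S} {ms : List (Move S)}
    (h : AllEnabled C ms) :
    directBlockages C ≤ countMoves (RelocIn Set.univ) C ms + directBlockages (play C ms) := by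
  induction ms generalizing C with
  | nil => simp [countMoves, play]
  | cons m ms ih =>
    obtain ⟨hm, hms⟩ := h
    have := ih hms
    simp only [countMoves, play]
    cases m with
    | retrieve s =>
      have hno : ¬ RelocIn Set.univ C (.retrieve s) := by
        rintro ⟨_, -, _, _, ⟨⟩, -⟩
      rw [if_neg hno, ← directBlockages_applyMove_retrieve hm]
      omega
    | relocate src dst =>
      obtain ⟨hsd, hne⟩ := hm
      have hyes : RelocIn Set.univ C (.relocate src dst) :=
        ⟨_, Set.mem_univ _, src, dst, rfl, hsd, List.getLast?_eq_some_getLast hne⟩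
      rw [if_pos hyes]
      have := directBlockages_le_applyMove_relocate C hsd
      omega

theorem directBlockages_le_countMoves {C : Config B S} {ms : List (Move S)}
    (h : Feasible C ms) : directBlockages C ≤ countMoves (RelocIn Set.univ) C ms := by
  have hend : directBlockages (play C ms) = 0 := by simp [directBlockages, h.2]
  simpa [hend] using directBlockages_le_countMoves_add h.1

end Moves

section Feasibility

variable {B S : ℕ}

def blocks (C : Config B S) : Multiset (Fin B) :=
  ∑ s, (C s : Multiset (Fin B))

theorem mem_blocks {C : Config B S} {b : Fin B} : b ∈ blocks C ↔ ∃ s, b ∈ C s := by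
  simp [blocks, Multiset.mem_sum]

theorem blocks_update_add (C : Config B S) (s : Fin S) (l : List (Fin B)) :
    blocks (update C s l) + C s = blocks C + l :=
  Finset.sum_comp_update_add (fun l : List (Fin B) => (l : Multiset (Fin B))) C s l

theorem blocks_applyMove_relocate (C : Config B S) {src dst : Fin S} (hsd : src ≠ dst) :
    blocks (applyMove C (.relocate src dst)) = blocks C := by
  cases hx : (C src).getLast? with
  | none => simp [applyMove, hx]
  | some x =>
    obtain ⟨l, hl⟩ := List.getLast?_eq_some_iff.1 hx
    rw [applyMove_relocate_of_eq_concat hl hsd]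
    have hsrc := blocks_update_add C src l
    have hdst := blocks_update_add (update C src l) dst (C dst ++ [x])
    rw [update_of_ne hsd.symm] at hdst
    rw [hl] at hsrc
    simp only [← Multiset.coe_add] at hsrc hdst
    have hsrc' : blocks (update C src l) + ↑[x] = blocks C :=
      add_right_cancel (b := (l : Multiset (Fin B))) (by rw [← hsrc]; abel)
    rw [← hsrc']
    exact add_right_cancel (b := (C dst : Multiset (Fin B))) (by rw [hdst]; abel)

theorem exists_allEnabled_blocks_play_add {C : Config B S} {s t : Fin S} (hst : s ≠ t)
    {b : Fin B} (hb : ∀ a ∈ blocks C, b ≤ a) {l above : List (Fin B)}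
    (hs : C s = l ++ b :: above) :
    ∃ ms, AllEnabled C ms ∧ blocks (play C ms) + {b} = blocks C := by
  induction above using List.reverseRecOn generalizing C with
  | nil =>
    have hret : Enabled C (.retrieve s) :=
      ⟨b, by simp [hs], fun s' a ha => hb a (mem_blocks.2 ⟨s', ha⟩)⟩
    refine ⟨[.retrieve s], ⟨hret, trivial⟩, ?_⟩
    have := blocks_update_add C s l
    rw [hs] at this
    simp only [play, applyMove_retrieve_of_eq_concat hs]
    refine add_right_cancel (b := (l : Multiset (Fin B))) ?_
    rw [← this, ← Multiset.coe_add, Multiset.coe_singleton]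
    abel
  | append_singleton above x ih =>
    have hs' : C s = (l ++ b :: above) ++ [x] := by simp [hs]
    have hC' := blocks_applyMove_relocate C hst
    obtain ⟨ms, hms, hplay⟩ := ih (C := applyMove C (.relocate s t)) (hC' ▸ hb)
      (by rw [applyMove_relocate_of_eq_concat hs' hst, update_of_ne hst, update_self])
    refine ⟨.relocate s t :: ms, ⟨⟨hst, by simp [hs]⟩, hms⟩, ?_⟩
    rw [← hC']
    exact hplay

theorem exists_feasible (hS : 2 ≤ S) (C : Config B S) : ∃ ms, Feasible C ms := by
  by_cases hC : blocks C = 0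
  · refine ⟨[], trivial, fun s => List.eq_nil_iff_forall_not_mem.2 fun a ha => ?_⟩
    simpa [hC] using mem_blocks (C := C).2 ⟨s, ha⟩
  obtain ⟨b, hbC, hbmin⟩ := Multiset.exists_min_image id hC
  obtain ⟨s, hbs⟩ := mem_blocks.1 hbC
  obtain ⟨l, above, hs⟩ := List.append_of_mem hbs
  obtain ⟨t, hts⟩ := Fintype.exists_ne_of_one_lt_card (by rw [Fintype.card_fin]; omega) s
  obtain ⟨ms, hms, hplay⟩ := exists_allEnabled_blocks_play_add hts.symm hbmin hs
  have hcard : Multiset.card (blocks (play C ms)) < Multiset.card (blocks C) := by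
    rw [← hplay]; simp
  obtain ⟨ms', hms', hend⟩ := exists_feasible hS (play C ms)
  exact ⟨ms ++ ms', hms.append hms', by rwa [play_append]⟩
termination_by Multiset.card (blocks C)

end Feasibility

theorem le_fMin {B S : ℕ} {C : Config B S} {P : Config B S → Move S → Prop} {n : ℕ}
    (hfeas : ∃ ms, Feasible C ms) (h : ∀ ms, Feasible C ms → n ≤ countMoves P C ms) :
    n ≤ fMin C P := by
  obtain ⟨ms, hms⟩ := hfeas
  exact le_csInf ⟨_, ms, hms, rfl⟩ (by rintro _ ⟨ms, hms, rfl⟩; exact h ms hms)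

theorem brp_directBlockage_LB_general {B S : ℕ} (hS : 2 ≤ S)
    (C : Config B S) :
    (∀ ms, Feasible C ms →
      directBlockages C ≤ countMoves (RelocIn (Set.univ : Set (Fin B))) C ms) ∧
    directBlockages C ≤ fRel C Set.univ := by
  exact ⟨fun _ => directBlockages_le_countMoves,
    le_fMin (exists_feasible hS C) fun _ => directBlockages_le_countMoves⟩

/-- direct-blockage lower bound: every feasible move sequence for
`C` contains at least as many relocations as the number of direct blockages of
`C`; in particular `f(Fin B)` is at least the number of direct blockages of `C`. -/
theorem brp_directBlockage_LB {B S : ℕ} (hS : 2 ≤ S) (hB : 1 ≤ B)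
    (C : Config B S) (hC : IsConfig C) :
    (∀ ms, Feasible C ms →
      directBlockages C ≤ countMoves (RelocIn (Set.univ : Set (Fin B))) C ms) ∧
    directBlockages C ≤ fRel C Set.univ :=
  brp_directBlockage_LB_general hS C
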